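/- arXiv:1511.00754 — 2 statements merged into one kernel-verified Lean document; each statement's English description precedes it below -/
import Mathlib

section
/- For all real numbers ε and δ with 0 < ε < 1 and 0 < δ < 1, letting q_i = ⌈(1/ε)·(ln(1/(1-δ)) + i·ln 2)⌉ for each positive integer i, the infinite series ∑_{i=1}^{∞} (1−ε)^{q_i} converges and its sum is at most 1−δ. -/
/-- For all real numbers `ε`, `δ` with `0 < ε < 1` and `0 < δ < 1`, letting
`q_i = ⌈(1/ε) * (ln (1/(1-δ)) + i * ln 2)⌉` for each positive integer `i`,
the series `∑_{i=1}^∞ (1 - ε) ^ q_i` converges and its sum is at most `1 - δ`. -/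
theorem tsum_one_sub_eps_pow_qi_le (ε δ : ℝ) (hε0 : 0 < ε) (hε1 : ε < 1)
    (hδ0 : 0 < δ) (hδ1 : δ < 1) :
    Summable (fun i : ℕ =>
        (1 - ε) ^ (⌈(1 / ε) * (Real.log (1 / (1 - δ)) + ((i + 1 : ℕ) : ℝ) * Real.log 2)⌉₊)) ∧
      (∑' i : ℕ,
          (1 - ε) ^ (⌈(1 / ε) * (Real.log (1 / (1 - δ)) + ((i + 1 : ℕ) : ℝ) * Real.log 2)⌉₊))
        ≤ 1 - δ := by
  have h1ε : (0:ℝ) < 1 - ε := by linarith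
  have h1δ : (0:ℝ) < 1 - δ := by linarith
  set f : ℕ → ℝ := fun i =>
      (1 - ε) ^ (⌈(1 / ε) * (Real.log (1 / (1 - δ)) + ((i + 1 : ℕ) : ℝ) * Real.log 2)⌉₊) with hf
  set g : ℕ → ℝ := fun i => (1 - δ) * (1/2 : ℝ) ^ (i + 1) with hg
  have key : ∀ i : ℕ, f i ≤ g i := by
    intro i
    set A : ℝ := Real.log (1 / (1 - δ)) + ((i + 1 : ℕ) : ℝ) * Real.log 2 with hA
    set q : ℕ := ⌈(1 / ε) * A⌉₊ with hq
    have hceil : (1 / ε) * A ≤ (q : ℝ) := Nat.le_ceil _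
    have hAq : A ≤ ε * q := by
      have := mul_le_mul_of_nonneg_left hceil (le_of_lt hε0)
      calc A = ε * ((1/ε) * A) := by field_simp
        _ ≤ ε * q := this
    have hlog : Real.log (1 - ε) ≤ -ε := by
      have := Real.log_le_sub_one_of_pos h1ε
      linarith
    have h1 : f i = Real.exp ((q : ℝ) * Real.log (1 - ε)) := by
      have e : Real.exp ((q : ℝ) * Real.log (1 - ε)) = (1 - ε) ^ q := by
        rw [Real.exp_nat_mul, Real.exp_log h1ε]
      rw [e]
    have h2 : (q : ℝ) * Real.log (1 - ε) ≤ -A := by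
      have hq0 : (0:ℝ) ≤ q := Nat.cast_nonneg _
      have : (q : ℝ) * Real.log (1 - ε) ≤ (q : ℝ) * (-ε) :=
        mul_le_mul_of_nonneg_left hlog hq0
      nlinarith
    have h3 : Real.exp (-A) = g i := by
      rw [hA, hg]
      simp only
      rw [neg_add, Real.exp_add]
      congr 1
      · rw [Real.log_div one_ne_zero (ne_of_gt h1δ), Real.log_one]
        rw [show -(0 - Real.log (1 - δ)) = Real.log (1 - δ) by ring]
        exact Real.exp_log h1δ
      · rw [← neg_mul, show -((((i:ℕ)+1 : ℕ) : ℝ)) * Real.log 2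
            = (((i:ℕ)+1 : ℕ) : ℝ) * Real.log (1/2) by
            rw [Real.log_div one_ne_zero two_ne_zero, Real.log_one]; ring]
        rw [Real.exp_nat_mul, Real.exp_log (by norm_num)]
    calc f i = Real.exp ((q : ℝ) * Real.log (1 - ε)) := h1
      _ ≤ Real.exp (-A) := Real.exp_le_exp.mpr h2
      _ = g i := h3
  have hfnn : ∀ i, 0 ≤ f i := fun i => pow_nonneg (le_of_lt h1ε) _
  have hhalf : Summable (fun n : ℕ => (1/2 : ℝ) ^ (n + 1)) :=
    ((summable_geometric_of_lt_one (r := (1/2:ℝ)) (by norm_num) (by norm_num)).mul_left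
      (1/2:ℝ)).congr (fun n => by rw [pow_succ]; ring)
  have hgsum : Summable g := hhalf.mul_left (1 - δ)
  have hfsum : Summable f := Summable.of_nonneg_of_le hfnn key hgsum
  refine ⟨hfsum, ?_⟩
  have htsum : ∑' i, g i = 1 - δ := by
    rw [hg]
    rw [tsum_mul_left]
    have : ∑' (i : ℕ), (1/2 : ℝ) ^ (i + 1) = 1 := by
      have e : ∀ i : ℕ, (1/2 : ℝ) ^ (i + 1) = (1/2) * (1/2) ^ i := fun i => by
        rw [pow_succ]; ring
      rw [tsum_congr e, tsum_mul_left,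
        tsum_geometric_of_lt_one (r := (1/2:ℝ)) (by norm_num) (by norm_num)]
      norm_num
    rw [this, mul_one]
  calc ∑' i, f i ≤ ∑' i, g i := Summable.tsum_le_tsum key hfsum hgsum
    _ = 1 - δ := htsum
end

section
/- Let (Ω, μ) be a probability space, ε and δ real numbers with 0 < ε < 1 and 0 < δ < 1, and for each positive integer i let q_i = ⌈(1/ε)·(ln(1/(1-δ)) + i·ln 2)⌉ and let A_i ⊆ Ω be a measurable set with μ(A_i) > ε. Then the sum over all positive integers i of the probabilities μ^{⊗q_i}({x ∈ Ω^{q_i} | for all j, x_j ∉ A_i}) is at most 1−δ. -/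
open MeasureTheory

private lemma real_key (ε δ : ℝ) (hε0 : 0 < ε) (hε1 : ε < 1)
    (hδ0 : 0 < δ) (hδ1 : δ < 1) (n : ℕ) :
    (1 - ε) ^ ⌈(1 / ε) * (Real.log (1 / (1 - δ)) + (n : ℝ) * Real.log 2)⌉₊
      ≤ (1 - δ) * (2 : ℝ)⁻¹ ^ n := by
  have hδ' : (0:ℝ) < 1 - δ := by linarith
  set L := Real.log (1 / (1 - δ)) with hL
  have hLpos : 0 ≤ L := Real.log_nonneg (by rw [le_div_iff₀ hδ']; linarith)
  have hln2 : 0 < Real.log 2 := Real.log_pos (by norm_num)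
  set c := (1 / ε) * (L + (n : ℝ) * Real.log 2) with hc
  have hc0 : 0 ≤ c := by
    apply mul_nonneg (by positivity)
    have : 0 ≤ (n : ℝ) * Real.log 2 := by positivity
    linarith
  have hqc : c ≤ (⌈c⌉₊ : ℝ) := Nat.le_ceil c
  have h1 : (1 - ε) ^ ⌈c⌉₊ ≤ Real.exp (-ε) ^ ⌈c⌉₊ := by
    apply pow_le_pow_left₀ (by linarith)
    have := Real.add_one_le_exp (-ε); linarith
  have h2 : Real.exp (-ε) ^ ⌈c⌉₊ = Real.exp (-(ε * ⌈c⌉₊)) := by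
    rw [← Real.exp_nat_mul]; ring_nf
  have h3 : Real.exp (-(ε * ⌈c⌉₊)) ≤ Real.exp (-(ε * c)) := by
    apply Real.exp_le_exp.2
    have : ε * c ≤ ε * ⌈c⌉₊ := by nlinarith
    linarith
  have h4 : ε * c = L + (n : ℝ) * Real.log 2 := by
    rw [hc, ← mul_assoc, mul_one_div_cancel hε0.ne', one_mul]
  have h5 : Real.exp (-(L + (n : ℝ) * Real.log 2)) = (1 - δ) * (2 : ℝ)⁻¹ ^ n := by
    rw [neg_add, Real.exp_add]
    congr 1
    · rw [Real.exp_neg, hL, Real.exp_log (by positivity)]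
      field_simp
    · rw [Real.exp_neg, Real.exp_nat_mul, Real.exp_log (by norm_num), inv_pow]
  calc (1 - ε) ^ ⌈c⌉₊ ≤ Real.exp (-(ε * ⌈c⌉₊)) := h2 ▸ h1
    _ ≤ Real.exp (-(ε * c)) := h3
    _ = (1 - δ) * (2 : ℝ)⁻¹ ^ n := by rw [h4, h5]

/-- Let `μ` be a probability measure, `0 < ε < 1`, `0 < δ < 1`, and for each positive
integer `i` let `q_i = ⌈(1/ε) * (ln (1/(1-δ)) + i * ln 2)⌉` and let `A_i` be a measurable
set with `μ (A_i) > ε`.  Then the sum over all positive integers `i` of the probability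
(under the `q_i`-fold product measure) that all `q_i` i.i.d. samples miss `A_i` is at
most `1 - δ`. -/
theorem sum_prob_all_miss_le (Ω : Type*) [MeasurableSpace Ω] (μ : Measure Ω)
    [IsProbabilityMeasure μ] (ε δ : ℝ) (hε0 : 0 < ε) (hε1 : ε < 1)
    (hδ0 : 0 < δ) (hδ1 : δ < 1)
    (A : ℕ → Set Ω) (hA : ∀ i, 1 ≤ i → MeasurableSet (A i))
    (hAε : ∀ i, 1 ≤ i → μ (A i) > ENNReal.ofReal ε) :
    (∑' i : ℕ,
        (Measure.pi fun _ :
            Fin ⌈(1 / ε) * (Real.log (1 / (1 - δ)) + ((i + 1 : ℕ) : ℝ) * Real.log 2)⌉₊ => μ)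
          {x | ∀ j, x j ∉ A (i + 1)})
      ≤ ENNReal.ofReal (1 - δ) := by
  have key : ∀ i : ℕ,
      (Measure.pi fun _ :
          Fin ⌈(1 / ε) * (Real.log (1 / (1 - δ)) + ((i + 1 : ℕ) : ℝ) * Real.log 2)⌉₊ => μ)
        {x | ∀ j, x j ∉ A (i + 1)}
      ≤ ENNReal.ofReal (1 - δ) * (2 : ENNReal)⁻¹ ^ (i + 1) := by
    intro i
    set q := ⌈(1 / ε) * (Real.log (1 / (1 - δ)) + ((i + 1 : ℕ) : ℝ) * Real.log 2)⌉₊ with hq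
    have hmeas := hA (i+1) (by omega)
    have hset : {x : Fin q → Ω | ∀ j, x j ∉ A (i + 1)}
        = Set.pi Set.univ (fun _ => (A (i+1))ᶜ) := by
      ext x; simp [Set.mem_pi]
    have h1 : (Measure.pi fun _ : Fin q => μ) {x | ∀ j, x j ∉ A (i + 1)}
        = (μ (A (i+1))ᶜ) ^ q := by
      rw [hset, Measure.pi_pi]
      simp
    have h2 : μ (A (i+1))ᶜ ≤ ENNReal.ofReal (1 - ε) := by
      rw [measure_compl hmeas (measure_ne_top μ _), measure_univ,
        ENNReal.ofReal_sub 1 hε0.le, ENNReal.ofReal_one]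
      exact tsub_le_tsub_left (hAε (i+1) (by omega)).le 1
    have h3 : (μ (A (i+1))ᶜ) ^ q ≤ ENNReal.ofReal ((1 - ε) ^ q) := by
      rw [ENNReal.ofReal_pow (by linarith)]
      exact pow_le_pow_left' h2 q
    have h4 : ENNReal.ofReal ((1 - ε) ^ q) ≤
        ENNReal.ofReal ((1 - δ) * (2 : ℝ)⁻¹ ^ (i + 1)) :=
      ENNReal.ofReal_le_ofReal (real_key ε δ hε0 hε1 hδ0 hδ1 (i + 1))
    have h5 : ENNReal.ofReal ((1 - δ) * (2 : ℝ)⁻¹ ^ (i + 1))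
        = ENNReal.ofReal (1 - δ) * (2 : ENNReal)⁻¹ ^ (i + 1) := by
      rw [ENNReal.ofReal_mul (by linarith), ENNReal.ofReal_pow (by norm_num),
        ENNReal.ofReal_inv_of_pos (by norm_num), ENNReal.ofReal_ofNat]
    calc _ = (μ (A (i+1))ᶜ) ^ q := h1
      _ ≤ ENNReal.ofReal ((1 - ε) ^ q) := h3
      _ ≤ _ := h5 ▸ h4
  calc _ ≤ ∑' i : ℕ, ENNReal.ofReal (1 - δ) * (2 : ENNReal)⁻¹ ^ (i + 1) :=
        ENNReal.tsum_le_tsum key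
    _ = ENNReal.ofReal (1 - δ) * ∑' i : ℕ, (2 : ENNReal)⁻¹ ^ (i + 1) := ENNReal.tsum_mul_left
    _ = ENNReal.ofReal (1 - δ) := by
        have : ∑' i : ℕ, (2 : ENNReal)⁻¹ ^ (i + 1) = 1 := by
          simp only [pow_succ', ENNReal.tsum_mul_left, ENNReal.tsum_geometric]
          rw [show (1 : ENNReal) - 2⁻¹ = 2⁻¹ by
            rw [ENNReal.sub_eq_of_eq_add (by norm_num)]; rw [ENNReal.inv_two_add_inv_two]]
          rw [inv_inv, ENNReal.inv_mul_cancel (by norm_num) (by norm_num)]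
        rw [this, mul_one]
end
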